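/- arXiv:0910.3187 — 2 statements merged into one kernel-verified Lean document; each statement's English description precedes it below -/
import Mathlib

section
/- Let A be a commutative ring, let a : ℕ → A be a sequence such that a_0 is a unit of A, let c : ℕ → A be any sequence, and let n ∈ ℕ. Let f = Σ_{i≥0} a_i z^i ∈ A⟦z⟧, which is a unit of A⟦z⟧ since its constant coefficient a_0 is a unit. Then Σ_α μ(−(n+1); α)·c_{n−|α|′}·a_0^{n−|α|}·∏_{i≥1} a_i^{α_i} = a_0^{2n+1}·Σ_{k=0}^{n} c_{n−k}·(coefficient of z^k in f^{−(n+1)}), where the left-hand sum runs over finitely supported α : {1,2,3,…} → ℕ with |α| ≤ n and |α|′ ≤ n, and f^{−(n+1)} denotes the (n+1)st power of the multiplicative inverse of f in A⟦z⟧. -/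
/-!
Write `f = a₀ (1 - g)`, where `g = 1 - a₀⁻¹ f` has no constant term. Then
`a₀ ^ (n + 1) f ^ (-(n + 1)) = (1 - g) ^ (-(n + 1))` is the substitution of `g` into
`(1 - X) ^ (-(n + 1)) = ∑ₘ C(n + m, n) Xᵐ`, and by the multinomial theorem the coefficient of `zᵏ`
in `gᵐ` is a sum over the `α` with `|α| = m` and `|α|' = k`. So both sides of the theorem become
sums over the `α` with `|α|' ≤ n`, and they agree term by term because
`μ(-(n+1); α) = (-1) ^ |α| C(n + |α|, n) multinomial(α)` and `a₀ ^ n a₀ ^ (-|α|) = a₀ ^ (n - |α|)`.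
-/

noncomputable section

/-- The modified multinomial coefficient
`μ(-(n+1); α) = (-1)^{|α|} (n+|α|)! / (n! ∏ αᵢ!)`, the coefficient of
`b₁^{α₁}b₂^{α₂}⋯` in the formal expansion of `(1 + b₁ + b₂ + ⋯)^{-(n+1)}`. -/
def muCoef (n : ℕ) (α : ℕ+ →₀ ℕ) : ℤ :=
  (-1) ^ (α.sum fun _ m => m) *
    (((n + α.sum fun _ m => m).factorial /
      (n.factorial * α.prod fun _ m => m.factorial) : ℕ) : ℤ)

open PowerSeries

theorem Finset.sum_range_mul_finsum_ite_eq {ι M : Type*} [Semiring M] (φ : ι → ℕ) (x : ℕ → M)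
    (Y : ι → M) {n : ℕ} (hfin : ({i | φ i ≤ n} ∩ Function.support Y).Finite) :
    ∑ k ∈ range (n + 1), x k * ∑ᶠ i, (if φ i = k then Y i else 0) =
      ∑ᶠ i, if φ i ≤ n then x (φ i) * Y i else 0 := by
  have hU {i : ι} (hi : φ i ≤ n) (hY : Y i ≠ 0) : i ∈ hfin.toFinset := by simp [hi, hY]
  have hk (k : ℕ) (hkn : k ∈ range (n + 1)) : x k * ∑ᶠ i, (if φ i = k then Y i else 0) =
      ∑ i ∈ hfin.toFinset, if φ i = k then x k * Y i else 0 := by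
    rw [finsum_eq_sum_of_support_subset (s := hfin.toFinset) _ fun i hi => ?_, mul_sum]
    · simp_rw [mul_ite, mul_zero]
    · obtain ⟨rfl, hY⟩ := ite_ne_right_iff.mp hi
      exact hU (mem_range_succ_iff.mp hkn) hY
  rw [sum_congr rfl hk, sum_comm, finsum_eq_sum_of_support_subset _ fun i hi => ?_]
  · refine sum_congr rfl fun i _ => ?_
    rw [sum_ite_eq]
    simp only [mem_range_succ_iff]
  · obtain ⟨hi, hxY⟩ := ite_ne_right_iff.mp hi
    exact hU hi (right_ne_zero_of_mul hxY)

theorem PNat.mem_Iio_succPNat {i : ℕ+} {k : ℕ} : i ∈ Finset.Iio k.succPNat ↔ (i : ℕ) ≤ k := by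
  rw [Finset.mem_Iio, ← PNat.coe_lt_coe, Nat.succPNat_coe, Nat.lt_succ_iff]

theorem Finsupp.sum_le_sum_pnat_mul (α : ℕ+ →₀ ℕ) :
    (α.sum fun _ e => e) ≤ α.sum fun i e => (i : ℕ) * e :=
  Finset.sum_le_sum fun i _ => Nat.le_mul_of_pos_left _ i.pos

theorem Finsupp.pnat_mul_apply_le_sum (α : ℕ+ →₀ ℕ) (i : ℕ+) :
    (i : ℕ) * α i ≤ α.sum fun j e => (j : ℕ) * e := by
  by_cases hi : i ∈ α.support
  · exact Finset.single_le_sum (f := fun j : ℕ+ => (j : ℕ) * α j) (fun _ _ => Nat.zero_le _) hi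
  · simp [Finsupp.notMem_support_iff.mp hi]

theorem Finsupp.apply_le_sum_pnat_mul (α : ℕ+ →₀ ℕ) (i : ℕ+) :
    α i ≤ α.sum fun j e => (j : ℕ) * e :=
  (Nat.le_mul_of_pos_left _ i.pos).trans (α.pnat_mul_apply_le_sum i)

theorem Finsupp.coe_le_sum_pnat_mul {α : ℕ+ →₀ ℕ} {i : ℕ+} (hi : i ∈ α.support) :
    (i : ℕ) ≤ α.sum fun j e => (j : ℕ) * e :=
  (Nat.le_mul_of_pos_right _ (Nat.pos_of_ne_zero (Finsupp.mem_support_iff.mp hi))).trans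
    (α.pnat_mul_apply_le_sum i)

theorem Finsupp.finite_setOf_sum_pnat_mul_le (n : ℕ) :
    {α : ℕ+ →₀ ℕ | (α.sum fun i e => (i : ℕ) * e) ≤ n}.Finite := by
  classical
  refine (Finset.Iic (∑ i ∈ Finset.Iio n.succPNat, Finsupp.single i n)).finite_toSet.subset
    fun α hα => ?_
  simp only [Set.mem_ofPred_eq, Finset.coe_Iic, Set.mem_Iic, Finsupp.le_def] at hα ⊢
  intro i
  by_cases hi : i ∈ α.support
  · rw [Finsupp.finsetSum_apply, Finset.sum_eq_single_of_mem i
      (PNat.mem_Iio_succPNat.mpr ((Finsupp.coe_le_sum_pnat_mul hi).trans hα)) fun j _ hj => by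
        rw [Finsupp.single_eq_of_ne hj.symm], Finsupp.single_eq_same]
    exact (α.apply_le_sum_pnat_mul i).trans hα
  · simp [Finsupp.notMem_support_iff.mp hi]

theorem muCoef_eq_choose_mul_multinomial (n : ℕ) (α : ℕ+ →₀ ℕ) :
    muCoef n α = (-1) ^ (α.sum fun _ e => e) *
      (((n + α.sum fun _ e => e).choose n * α.multinomial : ℕ) : ℤ) := by
  rw [muCoef]
  congr 2
  set m := α.sum fun _ e => e
  have hmult : (α.prod fun _ e => e.factorial) * α.multinomial = m.factorial :=
    Nat.multinomial_spec _ _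
  refine Nat.div_eq_of_eq_mul_left
    (Nat.mul_pos n.factorial_pos (Finset.prod_pos fun _ _ => Nat.factorial_pos _)) ?_
  calc (n + m).factorial = (n + m).choose n * m.factorial * n.factorial := by
        rw [add_comm n m]; exact (Nat.add_choose_mul_factorial_mul_factorial m n).symm
    _ = _ := by rw [← hmult]; ring

section

variable {R : Type*} [CommSemiring R]

theorem PowerSeries.coeff_pow_eq_zero_of_lt {g : R⟦X⟧} (hg : constantCoeff g = 0) {k m : ℕ}
    (h : k < m) :
    coeff k (g ^ m) = 0 :=
  X_pow_dvd_iff.mp (pow_dvd_pow_of_dvd (X_dvd_iff.mpr hg) m) k h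

theorem PowerSeries.coeff_sum_C_coeff_mul_X_pow {g : R⟦X⟧} (hg : constantCoeff g = 0)
    {s : Finset ℕ+} {j : ℕ} (hj : ∀ i : ℕ+, (i : ℕ) = j → i ∈ s) :
    coeff j (∑ i ∈ s, C (coeff (i : ℕ) g) * X ^ (i : ℕ)) = coeff j g := by
  simp_rw [map_sum, coeff_C_mul_X_pow]
  rcases Nat.eq_zero_or_pos j with rfl | hj0
  · simp [hg, (PNat.pos _).ne]
  · rw [Finset.sum_eq_single_of_mem ⟨j, hj0⟩ (hj _ rfl), PNat.mk_coe, if_pos rfl]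
    intro i _ hi
    rw [if_neg]
    rintro rfl
    exact hi rfl

theorem PowerSeries.coeff_aeval_X_pow {σ : Type*} (w : σ → ℕ) (Q : MvPolynomial σ R) (k : ℕ) :
    coeff k (MvPolynomial.aeval (fun i => (X : R⟦X⟧) ^ w i) Q) =
      ∑ α ∈ Q.support, if (α.sum fun i e => w i * e) = k then MvPolynomial.coeff α Q else 0 := by
  rw [MvPolynomial.aeval_def, MvPolynomial.eval₂_eq, map_sum]
  refine Finset.sum_congr rfl fun α _ => ?_
  simp_rw [← pow_mul, Finset.prod_pow_eq_pow_sum]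
  rw [algebraMap_eq, coeff_C_mul_X_pow]
  simp only [Finsupp.sum, eq_comm]

theorem PowerSeries.coeff_aeval_X_pow_linearCombination_X_pow {σ : Type*} (w : σ → ℕ)
    (d : σ →₀ R) (k m : ℕ) :
    coeff k (MvPolynomial.aeval (fun i => (X : R⟦X⟧) ^ w i)
        (Finsupp.linearCombination R (MvPolynomial.X : σ → MvPolynomial σ R) d ^ m)) =
      ∑ᶠ α : σ →₀ ℕ, if (α.sum fun _ e => e) = m ∧ (α.sum fun i e => w i * e) = k then
        α.multinomial * α.prod fun i e => d i ^ e
      else 0 := by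
  set P := Finsupp.linearCombination R (MvPolynomial.X : σ → MvPolynomial σ R) d
  have hterm (α : σ →₀ ℕ) :
      (if (α.sum fun _ e => e) = m ∧ (α.sum fun i e => w i * e) = k then
        α.multinomial * α.prod fun i e => d i ^ e else 0) =
      if (α.sum fun i e => w i * e) = k then MvPolynomial.coeff α (P ^ m) else 0 := by
    rw [MvPolynomial.coeff_linearCombination_X_pow]
    by_cases hk : (α.sum fun i e => w i * e) = k <;> simp only [hk, and_true, and_false, if_true,
      if_false]
  rw [coeff_aeval_X_pow, finsum_congr hterm,
    finsum_eq_sum_of_support_subset (s := (P ^ m).support) _ fun α hα => ?_]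
  contrapose hα
  simp [MvPolynomial.notMem_support_iff.mp hα]

end

section

variable {R : Type*} [CommRing R]

theorem PowerSeries.coeff_pow_congr {f g : R⟦X⟧} {k : ℕ} (h : ∀ j ≤ k, coeff j f = coeff j g)
    (m : ℕ) : coeff k (f ^ m) = coeff k (g ^ m) := by
  have hfg : X ^ (k + 1) ∣ f - g :=
    X_pow_dvd_iff.mpr fun j hj => by rw [map_sub, h j (by omega), sub_self]
  rw [← sub_eq_zero, ← map_sub]
  exact X_pow_dvd_iff.mp (hfg.trans (sub_dvd_pow_sub_pow f g m)) k k.lt_succ_self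

theorem PowerSeries.coeff_pow_eq_finsum {g : R⟦X⟧} (hg : constantCoeff g = 0) (k m : ℕ) :
    coeff k (g ^ m) = ∑ᶠ α : ℕ+ →₀ ℕ,
      if (α.sum fun _ e => e) = m ∧ (α.sum fun i e => (i : ℕ) * e) = k then
        α.multinomial * α.prod fun i e => coeff (i : ℕ) g ^ e
      else 0 := by
  classical
  set s := Finset.Iio k.succPNat
  -- Up to degree `k`, `g` is the image of the linear form `∑ i ∈ s, gᵢ Yᵢ` under `Yᵢ ↦ X ^ i`.
  set d : ℕ+ →₀ R := ∑ i ∈ s, Finsupp.single i (coeff (i : ℕ) g)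
  have hd (i : ℕ+) : d i = if i ∈ s then coeff (i : ℕ) g else 0 := by
    simp only [d, Finsupp.finsetSum_apply, Finsupp.single_apply, Finset.sum_ite_eq']
  have htrunc (j : ℕ) (hj : j ≤ k) : coeff j g = coeff j (MvPolynomial.aeval
      (fun i : ℕ+ => (X : R⟦X⟧) ^ (i : ℕ))
      (Finsupp.linearCombination R (MvPolynomial.X : ℕ+ → MvPolynomial ℕ+ R) d)) := by
    rw [map_sum, map_sum]
    simp only [Finsupp.linearCombination_single, map_smul, MvPolynomial.aeval_X, smul_eq_C_mul]
    exact (coeff_sum_C_coeff_mul_X_pow hg fun i hi =>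
      PNat.mem_Iio_succPNat.mpr (hi.trans_le hj)).symm
  rw [coeff_pow_congr htrunc, ← map_pow, coeff_aeval_X_pow_linearCombination_X_pow]
  refine finsum_congr fun α => ?_
  by_cases hα : (α.sum fun i e => (i : ℕ) * e) = k
  · have hprod : (α.prod fun i e => d i ^ e) = α.prod fun i e => coeff (i : ℕ) g ^ e :=
      Finsupp.prod_congr fun i hi => by
        rw [hd, if_pos (PNat.mem_Iio_succPNat.mpr (hα ▸ Finsupp.coe_le_sum_pnat_mul hi))]
    rw [hprod]
  · simp only [hα, and_false, if_false]

theorem PowerSeries.coeff_subst_eq_finsum (H : R⟦X⟧) {g : R⟦X⟧} (hg : constantCoeff g = 0)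
    (k : ℕ) :
    coeff k (H.subst g) = ∑ᶠ α : ℕ+ →₀ ℕ,
      if (α.sum fun i e => (i : ℕ) * e) = k then
        coeff (α.sum fun _ e => e) H * (α.multinomial * α.prod fun i e => coeff (i : ℕ) g ^ e)
      else 0 := by
  have hfin : ({α : ℕ+ →₀ ℕ | (α.sum fun _ e => e) ≤ k} ∩ Function.support fun α =>
      if (α.sum fun i e => (i : ℕ) * e) = k then
        (α.multinomial : R) * α.prod fun i e => coeff (i : ℕ) g ^ e
      else 0).Finite :=
    (Finsupp.finite_setOf_sum_pnat_mul_le k).subset fun α ⟨_, hα⟩ =>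
      (ite_ne_right_iff.mp hα).1.le
  rw [coeff_subst' (HasSubst.of_constantCoeff_zero' hg),
    finsum_eq_sum_of_support_subset (s := Finset.range (k + 1)) _ fun m hm => ?_]
  · simp_rw [smul_eq_mul, coeff_pow_eq_finsum hg k, ite_and]
    rw [Finset.sum_range_mul_finsum_ite_eq _ _ _ hfin]
    refine finsum_congr fun α => ?_
    by_cases hα : (α.sum fun i e => (i : ℕ) * e) = k
    · rw [if_pos hα, if_pos hα, if_pos (hα ▸ α.sum_le_sum_pnat_mul)]
    · simp only [hα, if_false, mul_zero, ite_self]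
  · by_contra h
    exact hm (by
      show coeff m H • coeff k (g ^ m) = 0
      rw [coeff_pow_eq_zero_of_lt hg (by simpa using h), smul_zero])

theorem PowerSeries.C_pow_mul_invOfUnit_pow_eq_subst (f : R⟦X⟧) (u : Rˣ) (hu : constantCoeff f = u)
    (n : ℕ) :
    C ((u : R) ^ (n + 1)) * f.invOfUnit u ^ (n + 1) =
      (invOneSubPow R (n + 1) : R⟦X⟧).subst (1 - C (↑u⁻¹ : R) * f) := by
  set g := 1 - C (↑u⁻¹ : R) * f
  have hg : constantCoeff g = 0 := by simp [g, hu]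
  have hsubst := HasSubst.of_constantCoeff_zero' hg
  have hinv : (C (↑u⁻¹ : R) * f) ^ (n + 1) * (invOneSubPow R (n + 1) : R⟦X⟧).subst g = 1 := by
    have h := congrArg (substAlgHom hsubst (R := R))
      (invOneSubPow_inv_eq_one_sub_pow R (n + 1) ▸ (invOneSubPow R (n + 1)).inv_val)
    rwa [map_mul, map_pow, map_sub, map_one, substAlgHom_X, coe_substAlgHom, sub_sub_cancel] at h
  calc C ((u : R) ^ (n + 1)) * f.invOfUnit u ^ (n + 1)
      = C ((u : R) ^ (n + 1)) * f.invOfUnit u ^ (n + 1) *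
          ((C (↑u⁻¹ : R) * f) ^ (n + 1) * (invOneSubPow R (n + 1) : R⟦X⟧).subst g) := by
        rw [hinv, mul_one]
    _ = (C ((u * u⁻¹ : Rˣ) : R) * (f * f.invOfUnit u)) ^ (n + 1) *
          (invOneSubPow R (n + 1) : R⟦X⟧).subst g := by
        rw [Units.val_mul, map_mul, map_pow]; ring
    _ = _ := by rw [mul_inv_cancel, Units.val_one, map_one, mul_invOfUnit f u hu, one_mul, one_pow,
          one_mul]

theorem PowerSeries.pow_mul_coeff_invOfUnit_pow_eq_finsum (f : R⟦X⟧) (u : Rˣ)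
    (hu : constantCoeff f = u) (n k : ℕ) :
    (u : R) ^ (n + 1) * coeff k (f.invOfUnit u ^ (n + 1)) = ∑ᶠ α : ℕ+ →₀ ℕ,
      if (α.sum fun i e => (i : ℕ) * e) = k then
        ((n + α.sum fun _ e => e).choose n : R) *
          (α.multinomial * α.prod fun i e => (-(↑u⁻¹ * coeff (i : ℕ) f)) ^ e)
      else 0 := by
  have hcoeff (i : ℕ+) : coeff (i : ℕ) (1 - C (↑u⁻¹ : R) * f) = -(↑u⁻¹ * coeff (i : ℕ) f) := by
    simp [coeff_one, i.ne_zero]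
  rw [← coeff_C_mul, C_pow_mul_invOfUnit_pow_eq_subst f u hu,
    coeff_subst_eq_finsum _ (by simp [hu])]
  simp_rw [invOneSubPow_val_succ_eq_mk_add_choose, coeff_mk, hcoeff]

theorem muCoef_mul_pow_mul_prod_eq (u : Rˣ) (a : ℕ+ → R) {n : ℕ} (α : ℕ+ →₀ ℕ)
    (hα : (α.sum fun _ e => e) ≤ n) :
    (muCoef n α : R) * (u : R) ^ (n - α.sum fun _ e => e) * (α.prod fun i e => a i ^ e) =
      (u : R) ^ n * (((n + α.sum fun _ e => e).choose n : R) *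
        (α.multinomial * α.prod fun i e => (-(↑u⁻¹ * a i)) ^ e)) := by
  set m := α.sum fun _ e => e
  have hprod : (α.prod fun i e => (-(↑u⁻¹ * a i)) ^ e) =
      (-1) ^ m * (↑u⁻¹ : R) ^ m * α.prod fun i e => a i ^ e := by
    simp_rw [← neg_mul, mul_pow, Finsupp.prod_mul]
    rw [← neg_pow, Finsupp.prod, Finset.prod_pow_eq_pow_sum]
    rfl
  have hpow : (u : R) ^ n * (↑u⁻¹ : R) ^ m = (u : R) ^ (n - m) := by
    rw [← Units.val_pow_eq_pow_val, ← Units.val_pow_eq_pow_val, ← Units.val_pow_eq_pow_val,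
      ← Units.val_mul, inv_pow, ← pow_sub _ hα]
  rw [hprod, muCoef_eq_choose_mul_multinomial]
  push_cast
  linear_combination (-((-1) ^ m * ((n + m).choose n * α.multinomial : R) *
    α.prod fun i e => a i ^ e)) * hpow

end

/-- Rearrangement of McClure's sum: for any commutative ring `A`, any sequence
`a : ℕ → A` with `a 0` a unit, any sequence `c : ℕ → A` and any `n`,
`∑_α μ(-(n+1); α) c_{n-|α|'} a₀^{n-|α|} ∏_{i≥1} aᵢ^{αᵢ}
  = a₀^{2n+1} ∑_{k=0}^{n} c_{n-k} · (coeff of z^k in f^{-(n+1)})`,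
where `f = ∑ aᵢ zⁱ` and the left sum runs over finitely supported
`α : {1,2,…} → ℕ` with `|α| ≤ n` and `|α|' ≤ n`. -/
theorem mcclure_sum_rearranged {A : Type*} [CommRing A] (a : ℕ → A) (ha : IsUnit (a 0))
    (c : ℕ → A) (n : ℕ) :
    (∑ᶠ α : ℕ+ →₀ ℕ,
      if (α.sum fun _ m => m) ≤ n ∧ (α.sum fun i m => (i : ℕ) * m) ≤ n then
        (muCoef n α : A) * c (n - α.sum fun i m => (i : ℕ) * m) *
          a 0 ^ (n - α.sum fun _ m => m) * (α.prod fun i m => a (i : ℕ) ^ m)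
      else 0)
    = a 0 ^ (2 * n + 1) *
        ∑ k ∈ Finset.range (n + 1),
          c (n - k) *
            PowerSeries.coeff k ((PowerSeries.mk a).invOfUnit ha.unit ^ (n + 1)) := by
  have hcoeff (k : ℕ) := pow_mul_coeff_invOfUnit_pow_eq_finsum (mk a) ha.unit (by simp) n k
  simp only [coeff_mk, ha.unit_spec] at hcoeff
  have hfin := (Finsupp.finite_setOf_sum_pnat_mul_le n).inter_of_left (Function.support fun α =>
    ((n + α.sum fun _ e => e).choose n : A) *
      (α.multinomial * α.prod fun i e => (-(↑ha.unit⁻¹ * a i)) ^ e))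
  have hsplit (k : ℕ) (x : A) :
      a 0 ^ (2 * n + 1) * (c (n - k) * x) = c (n - k) * a 0 ^ n * (a 0 ^ (n + 1) * x) := by
    ring
  simp_rw [Finset.mul_sum, hsplit, hcoeff]
  rw [Finset.sum_range_mul_finsum_ite_eq _ (fun k => c (n - k) * a 0 ^ n) _ hfin]
  refine finsum_congr fun α => ?_
  by_cases hα : (α.sum fun i e => (i : ℕ) * e) ≤ n
  · have hdeg := (Finsupp.sum_le_sum_pnat_mul α).trans hα
    have hterm := muCoef_mul_pow_mul_prod_eq ha.unit (fun i => a i) α hdeg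
    rw [ha.unit_spec] at hterm
    rw [if_pos ⟨hdeg, hα⟩, if_pos hα]
    linear_combination c (n - α.sum fun i e => (i : ℕ) * e) * hterm
  · rw [if_neg fun h => hα h.2, if_neg hα]

end
end

section
/- Division Algorithm: Let p be a prime, σ any type, and R = MvPolynomial σ ℤ. Let h ∈ R⟦ξ⟧ be a power series whose constant coefficient is the constant polynomial p. Then for every g ∈ R⟦ξ⟧ there exist unique power series d, s ∈ R⟦ξ⟧ such that g = d·h + s and, for every i, every integer coefficient of the polynomial coefficient s_i of ξ^i in s lies in the range {0, 1, …, p−1}. -/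
/-! Long division, one coefficient at a time. Comparing coefficients of `ξⁿ` in `g = d * h + s`
gives `g_n - ∑_{i<n} d_i h_{n-i} = d_n p + s_n`, so given `d_0, …, d_{n-1}` the pair `(d_n, s_n)`
is forced to be the quotient and remainder of Euclidean division by `p`, performed separately on
each integer coefficient of the polynomial on the left. -/

open PowerSeries Finset

namespace PowerSeries

variable {A : Type*}

theorem coeff_mul_eq_sum_range_add [Semiring A] (d h : A⟦X⟧) (n : ℕ) :
    coeff n (d * h) =
      ∑ i ∈ range n, coeff i d * coeff (n - i) h + coeff n d * constantCoeff h := by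
  rw [coeff_mul, Nat.sum_antidiagonal_eq_sum_range_succ_mk, sum_range_succ, Nat.sub_self,
    coeff_zero_eq_constantCoeff]

variable [Ring A] {c : A} {S : Set A} {h : A⟦X⟧}

noncomputable def quotientCoeff (quot : A → A) (g h : A⟦X⟧) : ℕ → A
  | n => quot (coeff n g - ∑ i : Fin n, quotientCoeff quot g h i * coeff (n - i) h)

theorem quotientCoeff_eq (quot : A → A) (g h : A⟦X⟧) (n : ℕ) :
    quotientCoeff quot g h n =
      quot (coeff n g - ∑ i ∈ range n, quotientCoeff quot g h i * coeff (n - i) h) := by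
  rw [quotientCoeff,
    Fin.sum_univ_eq_sum_range (fun i => quotientCoeff quot g h i * coeff (n - i) h)]

theorem exists_forall_coeff_sub_mul_mem (hS : ∀ a, ∃ q, a - q * c ∈ S)
    (hh : constantCoeff h = c) (g : A⟦X⟧) : ∃ d : A⟦X⟧, ∀ n, coeff n (g - d * h) ∈ S := by
  choose quot hquot using hS
  refine ⟨mk (quotientCoeff quot g h), fun n => ?_⟩
  rw [map_sub, coeff_mul_eq_sum_range_add, coeff_mk, hh, ← sub_sub,
    quotientCoeff_eq quot g h n]
  simp only [coeff_mk]
  exact hquot _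

theorem eq_of_mul_add_eq_mul_add
    (hS : ∀ q q' r r' : A, q * c + r = q' * c + r' → r ∈ S → r' ∈ S → q = q')
    (hh : constantCoeff h = c) {d d' s s' : A⟦X⟧} (he : d * h + s = d' * h + s')
    (hs : ∀ n, coeff n s ∈ S) (hs' : ∀ n, coeff n s' ∈ S) : d = d' := by
  ext n
  induction n using Nat.strong_induction_on with
  | _ n ih =>
    have hsum : ∑ i ∈ range n, coeff i d * coeff (n - i) h =
        ∑ i ∈ range n, coeff i d' * coeff (n - i) h :=
      sum_congr rfl fun i hi => by rw [ih i (mem_range.1 hi)]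
    have hn := congrArg (coeff n) he
    rw [map_add, map_add, coeff_mul_eq_sum_range_add, coeff_mul_eq_sum_range_add, hsum, hh,
      add_assoc, add_assoc] at hn
    exact hS _ _ _ _ (add_left_cancel hn) (hs n) (hs' n)

theorem existsUnique_mul_add_of_constantCoeff_eq
    (hS : ∀ a : A, ∃! qr : A × A, a = qr.1 * c + qr.2 ∧ qr.2 ∈ S)
    (hh : constantCoeff h = c) (g : A⟦X⟧) :
    ∃! ds : A⟦X⟧ × A⟦X⟧, g = ds.1 * h + ds.2 ∧ ∀ n, coeff n ds.2 ∈ S := by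
  have hdiv (a : A) : ∃ q, a - q * c ∈ S := by
    obtain ⟨⟨q, r⟩, ⟨rfl, hr⟩, -⟩ := hS a
    exact ⟨q, by rwa [add_sub_cancel_left]⟩
  have hquot (q q' r r' : A) (he : q * c + r = q' * c + r') (hr : r ∈ S) (hr' : r' ∈ S) :
      q = q' :=
    congrArg Prod.fst <|
      (hS (q * c + r)).unique (y₁ := (q, r)) (y₂ := (q', r')) ⟨rfl, hr⟩ ⟨he, hr'⟩
  obtain ⟨d, hd⟩ := exists_forall_coeff_sub_mul_mem hdiv hh g
  refine ⟨(d, g - d * h), ⟨(add_sub_cancel _ _).symm, hd⟩, fun ⟨d', s'⟩ ⟨he, hs'⟩ => ?_⟩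
  have hdd' : d' = d :=
    (eq_of_mul_add_eq_mul_add hquot hh (by rw [add_sub_cancel, ← he]) hd hs').symm
  subst hdd'
  rw [he, add_sub_cancel_left]

end PowerSeries

namespace MvPolynomial

variable {σ R S : Type*} [CommSemiring R] [CommSemiring S]

noncomputable def mapCoeffs (f : R → S) (hf : f 0 = 0) (q : MvPolynomial σ R) :
    MvPolynomial σ S :=
  AddMonoidAlgebra.ofCoeff (Finsupp.mapRange f hf (AddMonoidAlgebra.coeff q))

@[simp]
theorem coeff_mapCoeffs (f : R → S) (hf : f 0 = 0) (q : MvPolynomial σ R) (m : σ →₀ ℕ) :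
    coeff m (mapCoeffs f hf q) = f (coeff m q) :=
  Finsupp.mapRange_apply (hf := hf)

theorem existsUnique_mul_C_add_of_digits {p : ℤ} (hp : 0 < p) (q : MvPolynomial σ ℤ) :
    ∃! qr : MvPolynomial σ ℤ × MvPolynomial σ ℤ,
      q = qr.1 * C p + qr.2 ∧ ∀ m, 0 ≤ coeff m qr.2 ∧ coeff m qr.2 < p := by
  have key (qr : MvPolynomial σ ℤ × MvPolynomial σ ℤ) :
      (q = qr.1 * C p + qr.2 ∧ ∀ m, 0 ≤ coeff m qr.2 ∧ coeff m qr.2 < p) ↔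
        qr = (mapCoeffs (· / p) (Int.zero_ediv p) q, mapCoeffs (· % p) (Int.zero_emod p) q) := by
    simp only [MvPolynomial.ext_iff, Prod.ext_iff, coeff_mapCoeffs, coeff_add, mul_comm _ (C p),
      coeff_C_mul, ← forall_and]
    refine forall_congr' fun m => ?_
    rw [eq_comm (a := coeff m qr.1), eq_comm (a := coeff m qr.2), Int.ediv_emod_unique hp]
    constructor <;> rintro ⟨hq, hr⟩ <;> exact ⟨by linarith, hr⟩
  exact ⟨_, (key _).2 rfl, fun qr hqr => (key qr).1 hqr⟩

end MvPolynomial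

/-- Division Algorithm: over `R = MvPolynomial σ ℤ`, for any power series `h ∈ R⟦ξ⟧`
whose constant coefficient is the constant polynomial `p` (`p` prime) and any
`g ∈ R⟦ξ⟧`, there are unique power series `d, s` with `g = d·h + s` such that every
integer coefficient of every polynomial coefficient of `s` lies in `{0, …, p-1}`. -/
theorem division_algorithm {σ : Type*} (p : ℕ) (hp : p.Prime)
    (h : PowerSeries (MvPolynomial σ ℤ))
    (hh : PowerSeries.constantCoeff h = MvPolynomial.C (p : ℤ))
    (g : PowerSeries (MvPolynomial σ ℤ)) :
    ∃! ds : PowerSeries (MvPolynomial σ ℤ) × PowerSeries (MvPolynomial σ ℤ),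
      g = ds.1 * h + ds.2 ∧
        ∀ (i : ℕ) (m : σ →₀ ℕ),
          0 ≤ MvPolynomial.coeff m (PowerSeries.coeff i ds.2) ∧
            MvPolynomial.coeff m (PowerSeries.coeff i ds.2) < (p : ℤ) :=
  existsUnique_mul_add_of_constantCoeff_eq
    (S := {r : MvPolynomial σ ℤ | ∀ m, 0 ≤ r.coeff m ∧ r.coeff m < p})
    (MvPolynomial.existsUnique_mul_C_add_of_digits (Int.natCast_pos.mpr hp.pos)) hh g
end
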